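/- Let (𝓜, 𝓒) be a duality pair over a commutative ring R. Then 𝓜 is closed under pure submodules, pure quotients, and pure extensions; that is, for any short exact sequence 0 → A → B → C → 0 of R-modules that remains exact after tensoring with every R-module: (a) if B ∈ 𝓜 then A ∈ 𝓜, (b) if B ∈ 𝓜 then C ∈ 𝓜, and (c) if A ∈ 𝓜 and C ∈ 𝓜 then B ∈ 𝓜. -/

import Mathlib

open CategoryTheory

universe w u

/-- The character module `M⁺ = Hom_ℤ(M, ℚ/ℤ)` of `M`, as an object of `ModuleCat R`
(with the `R`-action `(r • f) x = f (r • x)`). -/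
noncomputable def charMod (R : Type u) [CommRing R] (M : ModuleCat.{u} R) : ModuleCat.{u} R :=
  ModuleCat.of R (CharacterModule M)

/-- `(𝓜, 𝓒)` is a duality pair over `R`: both classes are closed under isomorphism,
`M ∈ 𝓜 ↔ M⁺ ∈ 𝓒`, and `𝓒` is closed under direct summands and finite direct sums. -/
structure IsDualityPair (R : Type u) [CommRing R]
    (Mc Cc : ModuleCat.{u} R → Prop) : Prop where
  isoClosed_fst : ∀ {A B : ModuleCat.{u} R}, (A ≅ B) → Mc A → Mc B
  isoClosed_snd : ∀ {A B : ModuleCat.{u} R}, (A ≅ B) → Cc A → Cc B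
  char_mem_iff : ∀ M : ModuleCat.{u} R, Mc M ↔ Cc (charMod R M)
  summand_closed : ∀ A B : ModuleCat.{u} R, Cc (ModuleCat.of R (A × B)) → Cc A
  finSum_closed : ∀ A B : ModuleCat.{u} R, Cc A → Cc B → Cc (ModuleCat.of R (A × B))

/-!
Dualizing a pure exact sequence `0 → A → B → C → 0` gives a split exact sequence
`0 → C⁺ → B⁺ → A⁺ → 0`. It is exact because `ℚ/ℤ` is an injective `ℤ`-module, and a section
of `B⁺ → A⁺` is a preimage of the identity under `(A⁺ ⊗ B)⁺ → (A⁺ ⊗ A)⁺`, which is onto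
because `A⁺ ⊗ A → A⁺ ⊗ B` is injective. Hence `B⁺ ≅ C⁺ × A⁺`, and as `𝓒` is closed under
summands and finite sums, `B⁺ ∈ 𝓒` if and only if `A⁺ ∈ 𝓒` and `C⁺ ∈ 𝓒`.
-/

namespace CharacterModule

open LinearMap TensorProduct

variable {R : Type*} [CommRing R] {A B C : Type*} [AddCommGroup A] [AddCommGroup B]
  [AddCommGroup C] [Module R A] [Module R B] [Module R C]

lemma exact_dual {f : A →ₗ[R] B} {g : B →ₗ[R] C} (hfg : Function.Exact f g)
    (hg : Function.Surjective g) : Function.Exact (dual g) (dual f) :=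
  (Function.Exact.iff_of_ladder_addEquiv (f₁₂ := (dual g).toAddMonoidHom)
    (f₂₃ := (dual f).toAddMonoidHom)
    (g₁₂ := (lcomp ℤ _ g.toAddMonoidHom.toIntLinearMap).toAddMonoidHom)
    (g₂₃ := (lcomp ℤ _ f.toAddMonoidHom.toIntLinearMap).toAddMonoidHom)
    (addMonoidHomLequivInt ℤ).toAddEquiv (addMonoidHomLequivInt ℤ).toAddEquiv
    (addMonoidHomLequivInt ℤ).toAddEquiv rfl rfl).1
    (exact_lcomp_of_exact_of_surjective _ hfg hg)

lemma exists_dual_comp_eq_id_of_lTensor_injective {f : A →ₗ[R] B}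
    (hf : Function.Injective (f.lTensor (CharacterModule A))) :
    ∃ s : CharacterModule A →ₗ[R] CharacterModule B, dual f ∘ₗ s = .id := by
  obtain ⟨Φ, hΦ⟩ := dual_surjective_of_injective _ hf (homEquiv LinearMap.id)
  exact ⟨curry Φ, by ext x a; exact congr($hΦ (x ⊗ₜ a))⟩

lemma nonempty_dual_equiv_prod_of_lTensor_injective {f : A →ₗ[R] B} {g : B →ₗ[R] C}
    (hfg : Function.Exact f g) (hg : Function.Surjective g)
    (hf : Function.Injective (f.lTensor (CharacterModule A))) :
    Nonempty (CharacterModule B ≃ₗ[R] CharacterModule C × CharacterModule A) := by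
  obtain ⟨s, hs⟩ := exists_dual_comp_eq_id_of_lTensor_injective hf
  exact ⟨((exact_dual hfg hg).splitSurjectiveEquiv (dual_injective_of_surjective g hg) ⟨s, hs⟩).1⟩

end CharacterModule

namespace IsDualityPair

variable {R : Type u} [CommRing R] {Mc Cc : ModuleCat.{u} R → Prop}

lemma snd_prod_iff (h : IsDualityPair R Mc Cc) (X Y : ModuleCat.{u} R) :
    Cc (ModuleCat.of R (X × Y)) ↔ Cc X ∧ Cc Y := by
  refine ⟨fun hXY ↦ ⟨h.summand_closed X Y hXY, h.summand_closed Y X ?_⟩,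
    fun ⟨hX, hY⟩ ↦ h.finSum_closed X Y hX hY⟩
  exact h.isoClosed_snd (LinearEquiv.prodComm R X Y).toModuleIso hXY

lemma fst_iff_of_charModule_equiv_prod (h : IsDualityPair R Mc Cc) {M X Y : ModuleCat.{u} R}
    (e : CharacterModule M ≃ₗ[R] CharacterModule X × CharacterModule Y) :
    Mc M ↔ Mc X ∧ Mc Y := by
  have he : charMod R M ≅ ModuleCat.of R (charMod R X × charMod R Y) := e.toModuleIso
  rw [h.char_mem_iff, h.char_mem_iff, h.char_mem_iff, ← h.snd_prod_iff]
  exact ⟨h.isoClosed_snd he, h.isoClosed_snd he.symm⟩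

end IsDualityPair

theorem duality_pair_closed_under_purity
    (R : Type u) [CommRing R] (Mc Cc : ModuleCat.{u} R → Prop)
    (h : IsDualityPair R Mc Cc)
    (A B C : ModuleCat.{u} R) (f : A →ₗ[R] B) (g : B →ₗ[R] C)
    (hg : Function.Surjective g)
    (hfg : Function.Exact f g)
    (hpure : ∀ (E : Type u) [AddCommGroup E] [Module R E],
      Function.Injective (LinearMap.lTensor E f) ∧
      Function.Exact (LinearMap.lTensor E f) (LinearMap.lTensor E g) ∧
      Function.Surjective (LinearMap.lTensor E g)) :
    (Mc B → Mc A) ∧ (Mc B → Mc C) ∧ (Mc A → Mc C → Mc B) := by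
  obtain ⟨e⟩ := CharacterModule.nonempty_dual_equiv_prod_of_lTensor_injective hfg hg (hpure _).1
  have hB : Mc B ↔ Mc C ∧ Mc A := h.fst_iff_of_charModule_equiv_prod e
  tauto
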